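/- Let f be a non-negative submodular function on finite ground set N, and let S, OPT ⊆ N with |S| = |OPT| = k and S ≠ OPT. If for every u ∈ N \ S and v ∈ S the swap inequality (1 + ε/k)·f(S) ≥ f((S \ {v}) ∪ {u}) holds (for ε ∈ (0,1)), then (ε/k)·f(S) ≥ (f(S ∩ OPT) − f(S))/|S \ OPT| + (f(S ∪ OPT) − f(S))/|OPT \ S|. -/

import Mathlib

/-!
Submodularity means diminishing marginal returns. Hence `f (S ∪ OPT) - f S` and `f (S ∩ OPT) - f S`
are at most the sums of the single-element marginals of inserting `u ∈ OPT \ S` and deleting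
`v ∈ S \ OPT`, and the swap `S + u - v` gains at least the sum of the two marginals. The swap
hypothesis therefore bounds every such pair of marginals by `(ε / k) * f S`, and averaging over all
pairs `(u, v)` gives the claim.
-/

open Finset

section

variable {α β : Type*} [DecidableEq α] [AddCommGroup β] [PartialOrder β] [IsOrderedAddMonoid β]

def Submodular (f : Finset α → β) : Prop :=
  ∀ S T : Finset α, f (S ∪ T) + f (S ∩ T) ≤ f S + f T

namespace Submodular

variable {f : Finset α → β}

theorem insert_sub_le_insert_sub (hf : Submodular f) {S T : Finset α} {a : α} (hST : S ⊆ T)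
    (ha : a ∉ T) : f (insert a T) - f T ≤ f (insert a S) - f S := by
  have h := hf (insert a S) T
  rw [insert_union, union_eq_right.2 hST, insert_inter_of_notMem ha, inter_eq_left.2 hST] at h
  rwa [sub_le_sub_iff]

theorem union_sub_le_sum_insert_sub (hf : Submodular f) (S : Finset α) {T : Finset α}
    (hST : Disjoint S T) : f (S ∪ T) - f S ≤ ∑ u ∈ T, (f (insert u S) - f S) := by
  induction T using Finset.induction_on with
  | empty => simp
  | @insert a T ha ih =>
    have haS : a ∉ S := disjoint_right.1 hST (mem_insert_self a T)
    have haST : a ∉ S ∪ T := by simp [haS, ha]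
    rw [sum_insert ha, union_insert, ← sub_add_sub_cancel _ (f (S ∪ T))]
    exact add_le_add (hf.insert_sub_le_insert_sub subset_union_left haST)
      (ih (hST.mono_right (subset_insert a T)))

theorem sdiff_sub_le_sum_erase_sub (hf : Submodular f) {S A : Finset α} (hAS : A ⊆ S) :
    f (S \ A) - f S ≤ ∑ v ∈ A, (f (S.erase v) - f S) := by
  induction A using Finset.induction_on with
  | empty => simp
  | @insert a A ha ih =>
    have haSA : a ∈ S \ A := mem_sdiff.2 ⟨hAS (mem_insert_self a A), ha⟩
    have h := hf.insert_sub_le_insert_sub (erase_subset_erase a (sdiff_subset (s := S) (t := A)))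
      (notMem_erase a S)
    rw [insert_erase haSA, insert_erase ((mem_sdiff.1 haSA).1)] at h
    rw [sum_insert ha, sdiff_insert, ← sub_add_sub_cancel _ (f (S \ A))]
    refine add_le_add ?_ (ih ((subset_insert a A).trans hAS))
    rw [← neg_sub, ← neg_sub (f S)]
    exact neg_le_neg h

theorem erase_sub_add_insert_sub_le (hf : Submodular f) {S : Finset α} {u : α} (hu : u ∉ S)
    (v : α) : (f (S.erase v) - f S) + (f (insert u S) - f S) ≤ f (insert u (S.erase v)) - f S := by
  rw [← sub_add_sub_cancel (f (insert u (S.erase v))) (f (S.erase v)), add_comm]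
  exact add_le_add_left (hf.insert_sub_le_insert_sub (erase_subset v S) hu) _

end Submodular

theorem Finset.sdiff_nonempty_of_card_le_of_ne {s t : Finset α} (h : #t ≤ #s) (hne : s ≠ t) :
    (s \ t).Nonempty :=
  sdiff_nonempty.2 fun hst => hne (eq_of_subset_of_card_le hst h)

theorem Finset.sum_div_card_add_sum_div_card_le {ι κ 𝕜 : Type*} [Field 𝕜] [LinearOrder 𝕜]
    [IsStrictOrderedRing 𝕜] {A : Finset ι} {B : Finset κ} (hA : A.Nonempty) (hB : B.Nonempty)
    {x : ι → 𝕜} {y : κ → 𝕜} {c : 𝕜} (h : ∀ i ∈ A, ∀ j ∈ B, x i + y j ≤ c) :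
    (∑ i ∈ A, x i) / #A + (∑ j ∈ B, y j) / #B ≤ c := by
  have hA' : (0 : 𝕜) < #A := by exact_mod_cast hA.card_pos
  have hB' : (0 : 𝕜) < #B := by exact_mod_cast hB.card_pos
  have hx : ∀ j ∈ B, y j ≤ c - (∑ i ∈ A, x i) / #A := by
    intro j hj
    have := sum_le_card_nsmul A x (c - y j) fun i hi => le_sub_iff_add_le.2 (h i hi j hj)
    rw [nsmul_eq_mul, ← div_le_iff₀' hA'] at this
    linarith
  have := sum_le_card_nsmul B y _ hx
  rw [nsmul_eq_mul, ← div_le_iff₀' hB'] at this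
  linarith

end

theorem stmt_18_general {N : Type*} [DecidableEq N] (f : Finset N → ℝ)
    (hsub : ∀ S T : Finset N, f (S ∪ T) + f (S ∩ T) ≤ f S + f T)
    (k : ℕ) (ε : ℝ)
    (S OPT : Finset N) (hS : S.card = k) (hOPT : OPT.card = k) (hne : S ≠ OPT)
    (hswap : ∀ u : N, u ∉ S → ∀ v ∈ S, (1 + ε / k) * f S ≥ f (insert u (S.erase v))) :
    (ε / k) * f S ≥ (f (S ∩ OPT) - f S) / ((S \ OPT).card : ℝ)
      + (f (S ∪ OPT) - f S) / ((OPT \ S).card : ℝ) := by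
  have hf : Submodular f := hsub
  have hcard : #S = #OPT := hS.trans hOPT.symm
  have hpair : ∀ v ∈ S \ OPT, ∀ u ∈ OPT \ S,
      (f (S.erase v) - f S) + (f (insert u S) - f S) ≤ ε / k * f S := fun v hv u hu =>
    (hf.erase_sub_add_insert_sub_le (mem_sdiff.1 hu).2 v).trans
      (by linarith [hswap u (mem_sdiff.1 hu).2 v (mem_sdiff.1 hv).1])
  have herase := hf.sdiff_sub_le_sum_erase_sub (sdiff_subset (s := S) (t := OPT))
  have hinsert := hf.union_sub_le_sum_insert_sub S (disjoint_sdiff (s := S) (t := OPT))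
  rw [sdiff_sdiff_right_self, inf_eq_inter] at herase
  rw [union_sdiff_self_eq_union] at hinsert
  refine le_trans ?_ (sum_div_card_add_sum_div_card_le
    (sdiff_nonempty_of_card_le_of_ne hcard.ge hne)
    (sdiff_nonempty_of_card_le_of_ne hcard.le hne.symm) hpair)
  gcongr

theorem stmt_18 {N : Type*} [Fintype N] [DecidableEq N] (f : Finset N → ℝ)
    (hsub : ∀ S T : Finset N, f (S ∪ T) + f (S ∩ T) ≤ f S + f T)
    (hnonneg : ∀ S : Finset N, 0 ≤ f S)
    (k : ℕ) (ε : ℝ) (hε : 0 < ε ∧ ε < 1)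
    (S OPT : Finset N) (hS : S.card = k) (hOPT : OPT.card = k) (hne : S ≠ OPT)
    (hswap : ∀ u : N, u ∉ S → ∀ v ∈ S, (1 + ε / k) * f S ≥ f (insert u (S.erase v))) :
    (ε / k) * f S ≥ (f (S ∩ OPT) - f S) / ((S \ OPT).card : ℝ)
      + (f (S ∪ OPT) - f S) / ((OPT \ S).card : ℝ) :=
  stmt_18_general f hsub k ε S OPT hS hOPT hne hswap
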